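/- arXiv:1112.1632 — 5 statements merged into one kernel-verified Lean document; each statement's English description precedes it below -/
import Mathlib

section
/- Let H be a Krein space with fundamental symmetry J, let M₊ be a maximal uniformly J-positive subspace and M₋ a maximal uniformly J-negative subspace of H. Let I₊ and I₋ be disjoint index sets, let F₊ = (f_i)_{i∈I₊} be a frame for the Hilbert space (M₊, [·,·]) and F₋ = (f_i)_{i∈I₋} a frame for the Hilbert space (M₋, −[·,·]). Then the combined family F = (f_i)_{i∈I₊∪I₋} is a J-frame for H. -/
/- Frames for Krein spaces ("J-frames"), following Giribet–Maestripieri–Martínez Pería–Massey.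

A Krein space is modelled as a complex Hilbert space `H` together with a fundamental symmetry
`J : H →L[ℂ] H` (selfadjoint, `J ∘L J = 1`); the indefinite inner product is `[x,y] = ⟪J x, y⟫`. -/

noncomputable section

open scoped ComplexInnerProductSpace ComplexOrder
open ContinuousLinearMap

attribute [local instance] Classical.propDecidable

namespace KreinFrames

universe u

variable {H : Type*} [NormedAddCommGroup H] [InnerProductSpace ℂ H]

/-- A subspace `M` is uniformly `J`-positive: `[x,x] ≥ α‖x‖²` on `M` for some `α > 0`. -/
def UnifJPos (J : H →L[ℂ] H) (M : Submodule ℂ H) : Prop :=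
  ∃ α : ℝ, 0 < α ∧ ∀ x ∈ M, α * ‖x‖ ^ 2 ≤ (⟪J x, x⟫).re

/-- A subspace `M` is uniformly `J`-negative: `[x,x] ≤ -α‖x‖²` on `M` for some `α > 0`. -/
def UnifJNeg (J : H →L[ℂ] H) (M : Submodule ℂ H) : Prop :=
  ∃ α : ℝ, 0 < α ∧ ∀ x ∈ M, (⟪J x, x⟫).re ≤ -(α * ‖x‖ ^ 2)

/-- Maximal uniformly `J`-positive subspace. -/
def MaxUnifJPos (J : H →L[ℂ] H) (M : Submodule ℂ H) : Prop :=
  UnifJPos J M ∧ ∀ M' : Submodule ℂ H, UnifJPos J M' → M ≤ M' → M' = M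

/-- Maximal uniformly `J`-negative subspace. -/
def MaxUnifJNeg (J : H →L[ℂ] H) (M : Submodule ℂ H) : Prop :=
  UnifJNeg J M ∧ ∀ M' : Submodule ℂ H, UnifJNeg J M' → M ≤ M' → M' = M

/-- The `J`-orthogonal companion `M^{[⊥]} = {x | [x,m] = 0 ∀ m ∈ M}` of a subspace `M`. -/
def Jorth (J : H →L[ℂ] H) (M : Submodule ℂ H) : Submodule ℂ H where
  carrier := {x | ∀ m ∈ M, ⟪J x, m⟫ = 0}
  zero_mem' := by intro m _; simp
  add_mem' := by
    intro a b ha hb m hm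
    rw [map_add, inner_add_left, ha m hm, hb m hm, add_zero]
  smul_mem' := by
    intro c x hx m hm
    rw [map_smul, inner_smul_left, hx m hm, mul_zero]

/-- `T : ℓ²(I) → H` is the synthesis operator of the family `f`, i.e. `T e_i = f_i`. -/
def IsSynthesis {I : Type*} (f : I → H) (T : lp (fun _ : I => ℂ) 2 →L[ℂ] H) : Prop :=
  ∀ i, T (lp.single 2 i 1) = f i

/-- `f` is a `J`-frame: it is a Bessel family (it admits a bounded synthesis operator `T`),
and the ranges of `T₊ = T P₊` and `T₋ = T P₋` (the synthesis operators of the subfamilies of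
`J`-nonnegative and `J`-negative vectors) are maximal uniformly `J`-positive resp. maximal
uniformly `J`-negative subspaces of `H`. -/
def IsJFrame {I : Type*} (J : H →L[ℂ] H) (f : I → H) : Prop :=
  ∃ T Tp Tm : lp (fun _ : I => ℂ) 2 →L[ℂ] H,
    IsSynthesis f T ∧
    IsSynthesis (fun i => if 0 ≤ (⟪J (f i), f i⟫).re then f i else 0) Tp ∧
    IsSynthesis (fun i => if 0 ≤ (⟪J (f i), f i⟫).re then 0 else f i) Tm ∧
    MaxUnifJPos J (LinearMap.range (Tp : lp (fun _ : I => ℂ) 2 →ₗ[ℂ] H)) ∧ MaxUnifJNeg J (LinearMap.range (Tm : lp (fun _ : I => ℂ) 2 →ₗ[ℂ] H))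

/-- `c₀(M, C)`: supremum of `|⟪m,n⟫|` over unit vectors `m ∈ M` and unit `J`-neutral vectors
`n` (the cone `C = {n | [n,n] = 0}`). -/
def c0 (J : H →L[ℂ] H) (M : Submodule ℂ H) : ℝ :=
  sSup {r : ℝ | ∃ m ∈ M, ∃ n : H, ⟪J n, n⟫ = 0 ∧ ‖m‖ = 1 ∧ ‖n‖ = 1 ∧ r = ‖⟪m, n⟫‖}

/-- Cosine of the Friedrichs angle between two subspaces. -/
def friedrichs (S T : Submodule ℂ H) : ℝ :=
  sSup {r : ℝ | ∃ x ∈ S ⊓ (S ⊓ T)ᗮ, ∃ y ∈ T ⊓ (S ⊓ T)ᗮ, ‖x‖ = 1 ∧ ‖y‖ = 1 ∧ r = ‖⟪x, y⟫‖}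

/-- The reduced minimum modulus `γ(A) = inf {‖Ax‖ : x ∈ N(A)^⊥, ‖x‖ = 1}`. -/
def rmm {E F : Type*} [NormedAddCommGroup E] [InnerProductSpace ℂ E]
    [NormedAddCommGroup F] [InnerProductSpace ℂ F] (A : E →L[ℂ] F) : ℝ :=
  sInf {r : ℝ | ∃ x ∈ (LinearMap.ker (A : E →ₗ[ℂ] F))ᗮ, ‖x‖ = 1 ∧ r = ‖A x‖}

/-- The set `Q` of bounded idempotents with uniformly `J`-positive range and uniformly
`J`-negative kernel. -/
def QSet (J : H →L[ℂ] H) : Set (H →L[ℂ] H) :=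
  {Q | Q ∘L Q = Q ∧ UnifJPos J (LinearMap.range (Q : H →ₗ[ℂ] H)) ∧ UnifJNeg J (LinearMap.ker (Q : H →ₗ[ℂ] H))}

/-- `ℓ²(s)` as a subspace of `ℓ²(I)`, for `s : Set I`. -/
def lpSub {I : Type*} (s : Set I) : Submodule ℂ (lp (fun _ : I => ℂ) 2) where
  carrier := {x | ∀ i ∉ s, x i = 0}
  zero_mem' := by intro i _; simp
  add_mem' := by
    intro a b ha hb i hi
    have h : (↑(a + b) : ∀ _ : I, ℂ) i = a i + b i := by rw [lp.coeFn_add]; rfl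
    rw [h, ha i hi, hb i hi, add_zero]
  smul_mem' := by
    intro c x hx i hi
    have h : (↑(c • x) : ∀ _ : I, ℂ) i = c • (x i : ℂ) := by rw [lp.coeFn_smul]; rfl
    rw [h, hx i hi, smul_zero]

/-- `S` is the `J`-frame operator of some `J`-frame: `S = T T^#` where `T` is the synthesis
operator of a `J`-frame and `T^# = J₂ T* J`. -/
def IsJFrameOperator {H : Type u} [NormedAddCommGroup H] [InnerProductSpace ℂ H]
    [CompleteSpace H] (J S : H →L[ℂ] H) : Prop :=
  ∃ (I : Type u) (f : I → H) (T Tp Tm : lp (fun _ : I => ℂ) 2 →L[ℂ] H)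
    (J2 : lp (fun _ : I => ℂ) 2 →L[ℂ] lp (fun _ : I => ℂ) 2),
    IsSynthesis f T ∧
    IsSynthesis (fun i => if 0 ≤ (⟪J (f i), f i⟫).re then f i else 0) Tp ∧
    IsSynthesis (fun i => if 0 ≤ (⟪J (f i), f i⟫).re then 0 else f i) Tm ∧
    MaxUnifJPos J (LinearMap.range (Tp : lp (fun _ : I => ℂ) 2 →ₗ[ℂ] H)) ∧ MaxUnifJNeg J (LinearMap.range (Tm : lp (fun _ : I => ℂ) 2 →ₗ[ℂ] H)) ∧
    (∀ (x : lp (fun _ : I => ℂ) 2) (i : I),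
      J2 x i = if 0 ≤ (⟪J (f i), f i⟫).re then (x i : ℂ) else -(x i : ℂ)) ∧
    S = T ∘L J2 ∘L adjoint T ∘L J

/- On a closed uniformly `J`-positive subspace `M` the form `x ↦ ⟪J x, x⟫` is coercive, so by
Lax–Milgram every vector `h` agrees on `M` with some `J g`, `g ∈ M`. The coefficients `⟪f i, h⟫`
are therefore frame coefficients `[g, f i]`, hence square summable, and by the closed graph theorem
the analysis operator `C` is bounded; its adjoint is the synthesis operator `T`. The lower frame
bound makes `C` bounded below on `M`, so `T C` is coercive on `M` and `T` maps onto `M`.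
Maximal uniformly definite subspaces are closed, and the negative part is the positive part
for `-J`. -/

section Bessel

variable {I : Type*}

theorem exists_analysisOp_of_summable [CompleteSpace H] (g : I → H)
    (hg : ∀ h, Summable fun i => ‖⟪g i, h⟫‖ ^ 2) :
    ∃ C : H →L[ℂ] lp (fun _ : I => ℂ) 2, ∀ h i, C h i = ⟪g i, h⟫ := by
  have hmem : ∀ h, Memℓp (fun i => ⟪g i, h⟫) 2 := fun h =>
    memℓp_gen (by simpa [Real.rpow_two] using hg h)
  let C : H →ₗ[ℂ] lp (fun _ : I => ℂ) 2 :=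
    { toFun := fun h => ⟨_, hmem h⟩
      map_add' := fun a b => lp.ext <| funext fun i => inner_add_right _ _ _
      map_smul' := fun c a => lp.ext <| funext fun i => inner_smul_right _ _ _ }
  refine ⟨⟨C, C.continuous_of_seq_closed_graph fun u x y hu hy => ?_⟩, fun h i => rfl⟩
  refine lp.ext <| funext fun i => tendsto_nhds_unique ?_
    ((continuous_const.inner continuous_id).continuousAt.tendsto.comp hu)
  exact ((lp.evalCLM ℂ (fun _ : I => ℂ) 2 i).continuous.tendsto y).comp hy

theorem isSynthesis_adjoint [CompleteSpace H] {g : I → H} {C : H →L[ℂ] lp (fun _ : I => ℂ) 2}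
    (hC : ∀ h i, C h i = ⟪g i, h⟫) : IsSynthesis g (adjoint C) := fun i =>
  ext_inner_right ℂ fun h => by
    simp [adjoint_inner_left, lp.inner_single_left, hC]

theorem norm_sq_analysisOp {g : I → H} {C : H →L[ℂ] lp (fun _ : I => ℂ) 2}
    (hC : ∀ h i, C h i = ⟪g i, h⟫) (h : H) : ‖C h‖ ^ 2 = ∑' i, ‖⟪g i, h⟫‖ ^ 2 := by
  simpa [Real.rpow_two, hC] using lp.norm_rpow_eq_tsum (p := 2) (by norm_num) (C h)

end Bessel

theorem surjective_of_coercive {E : Type*} [NormedAddCommGroup E] [InnerProductSpace ℂ E]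
    [CompleteSpace E] (A : E →L[ℂ] E) {c : ℝ} (hc : 0 < c)
    (hA : ∀ x, c * ‖x‖ ^ 2 ≤ (⟪A x, x⟫).re) : Function.Surjective A := by
  have hbelow : ∀ x, c * ‖x‖ ≤ ‖A x‖ := by
    intro x
    rcases (norm_nonneg x).eq_or_lt with hx | hx
    · simp [← hx]
    · refine le_of_mul_le_mul_right ?_ hx
      calc c * ‖x‖ * ‖x‖ = c * ‖x‖ ^ 2 := by ring
        _ ≤ (⟪A x, x⟫).re := hA x
        _ ≤ ‖A x‖ * ‖x‖ := (Complex.re_le_norm _).trans (norm_inner_le_norm _ _)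
  have hclosed : IsClosed (LinearMap.range (A : E →ₗ[ℂ] E) : Set E) := by
    rw [LinearMap.coe_range]
    exact (A.antilipschitz_of_bound (K := (Real.toNNReal c)⁻¹) fun x => by
        rw [NNReal.coe_inv, Real.coe_toNNReal _ hc.le, inv_mul_eq_div, le_div_iff₀ hc, mul_comm]
        exact hbelow x).isClosed_range A.uniformContinuous
  have := hclosed.completeSpace_coe
  rw [← ContinuousLinearMap.coe_coe, ← LinearMap.range_eq_top, ← Submodule.orthogonal_eq_bot_iff,
    Submodule.eq_bot_iff]
  intro w hw
  have h0 : ⟪A w, w⟫ = 0 := (Submodule.mem_orthogonal _ w).mp hw _ ⟨w, rfl⟩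
  have : c * ‖w‖ ^ 2 ≤ 0 := by simpa [h0] using hA w
  by_contra hw0
  linarith [mul_pos hc (pow_pos (norm_pos_iff.mpr hw0) 2)]

theorem summable_of_pos_le_tsum {ι : Type*} {f : ι → ℝ} {a : ℝ} (ha : 0 < a)
    (h : a ≤ ∑' i, f i) : Summable f := by
  by_contra hf
  rw [tsum_eq_zero_of_not_summable hf] at h
  exact h.not_gt ha

theorem norm_le_of_inner_eq_inner_self {m x : H} (h : ⟪m, x⟫ = ⟪m, m⟫) : ‖m‖ ≤ ‖x‖ := by
  rcases eq_or_ne m 0 with rfl | hm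
  · rw [norm_zero]; positivity
  refine le_of_mul_le_mul_left ?_ (norm_pos_iff.mpr hm)
  calc ‖m‖ * ‖m‖ = (⟪m, x⟫).re := by
        rw [h]; exact (inner_self_eq_norm_mul_norm (𝕜 := ℂ) m).symm
    _ ≤ ‖m‖ * ‖x‖ := (Complex.re_le_norm _).trans (norm_inner_le_norm _ _)

theorem exists_mem_inner_eq_of_coercive (M : Submodule ℂ H) [CompleteSpace M] (A : H →L[ℂ] H)
    {c : ℝ} (hc : 0 < c) (hA : ∀ x ∈ M, c * ‖x‖ ^ 2 ≤ (⟪A x, x⟫).re) (h : H) :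
    ∃ g ∈ M, ∀ m ∈ M, ⟪m, A g⟫ = ⟪m, h⟫ := by
  let P := M.orthogonalProjectionOnto
  obtain ⟨g, hg⟩ := surjective_of_coercive (P ∘L A ∘L M.subtypeL) hc
    (fun x => by simpa [P, Submodule.coe_inner] using hA x x.2) (P h)
  refine ⟨g, g.2, fun m hm => ?_⟩
  have := congrArg (fun y : M => ⟪(⟨m, hm⟩ : M), y⟫) hg
  simpa [P] using this

theorem range_adjoint_eq_of_bounded_below [CompleteSpace H] {K : Type*} [NormedAddCommGroup K]
    [InnerProductSpace ℂ K] [CompleteSpace K] {M : Submodule ℂ H} [CompleteSpace M]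
    {C : H →L[ℂ] K} (hker : ∀ u ∈ Mᗮ, C u = 0) {c : ℝ} (hc : 0 < c)
    (hbelow : ∀ m ∈ M, c * ‖m‖ ^ 2 ≤ ‖C m‖ ^ 2) :
    LinearMap.range (adjoint C : K →ₗ[ℂ] H) = M := by
  have hle : LinearMap.range (adjoint C : K →ₗ[ℂ] H) ≤ M := by
    rintro _ ⟨y, rfl⟩
    rw [← M.orthogonal_orthogonal, Submodule.mem_orthogonal]
    intro u hu
    rw [ContinuousLinearMap.coe_coe, adjoint_inner_right, hker u hu, inner_zero_left]
  refine le_antisymm hle fun m hm => ?_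
  obtain ⟨g, hg, hgm⟩ := exists_mem_inner_eq_of_coercive M (adjoint C ∘L C) hc
    (fun x hx => by
      simpa [adjoint_inner_left, inner_self_eq_norm_sq_to_K, ← Complex.ofReal_pow] using
        hbelow x hx)
    m
  have hCg : adjoint C (C g) ∈ M := hle ⟨C g, rfl⟩
  have hd : adjoint C (C g) - m = 0 := by
    have := hgm _ (M.sub_mem hCg hm)
    rwa [comp_apply, ← sub_eq_zero, ← inner_sub_right, inner_self_eq_zero] at this
  exact ⟨C g, sub_eq_zero.mp hd⟩

section Krein

variable {J : H →L[ℂ] H} {M : Submodule ℂ H}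

theorem UnifJPos.re_inner_nonneg (hM : UnifJPos J M) {x : H} (hx : x ∈ M) :
    0 ≤ (⟪J x, x⟫).re := by
  obtain ⟨α, hα, hαM⟩ := hM
  exact (by positivity : 0 ≤ α * ‖x‖ ^ 2).trans (hαM x hx)

theorem UnifJNeg.eq_zero_of_re_inner_nonneg (hM : UnifJNeg J M) {x : H} (hx : x ∈ M)
    (h : 0 ≤ (⟪J x, x⟫).re) : x = 0 := by
  obtain ⟨α, hα, hαM⟩ := hM
  by_contra hx0
  linarith [hαM x hx, mul_pos hα (pow_pos (norm_pos_iff.mpr hx0) 2)]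

theorem unifJPos_neg_iff : UnifJPos (-J) M ↔ UnifJNeg J M := by
  simp only [UnifJPos, UnifJNeg, neg_apply, inner_neg_left, Complex.neg_re, le_neg]

theorem maxUnifJPos_neg_iff : MaxUnifJPos (-J) M ↔ MaxUnifJNeg J M := by
  simp only [MaxUnifJPos, MaxUnifJNeg, unifJPos_neg_iff]

theorem UnifJPos.closure (hM : UnifJPos J M) : UnifJPos J M.topologicalClosure := by
  obtain ⟨α, hα, hαM⟩ := hM
  have hcl : IsClosed {x : H | α * ‖x‖ ^ 2 ≤ (⟪J x, x⟫).re} :=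
    isClosed_le (by fun_prop) (Complex.continuous_re.comp (J.continuous.inner continuous_id))
  refine ⟨α, hα, fun x hx => ?_⟩
  rw [← SetLike.mem_coe, Submodule.topologicalClosure_coe] at hx
  exact closure_minimal hαM hcl hx

theorem MaxUnifJPos.isClosed (hM : MaxUnifJPos J M) : IsClosed (M : Set H) := by
  rw [← hM.2 _ hM.1.closure M.le_topologicalClosure]
  exact M.isClosed_topologicalClosure

theorem exists_synthesis_range_eq_of_lowerBound [CompleteSpace H] {I : Type*} [CompleteSpace M]
    (hM : UnifJPos J M) {g : I → H}
    (hg : ∀ i, g i ∈ M) {A : ℝ} (hA : 0 < A)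
    (hlow : ∀ x ∈ M, A * (⟪J x, x⟫).re ≤ ∑' i, ‖⟪g i, J x⟫‖ ^ 2) :
    ∃ T : lp (fun _ : I => ℂ) 2 →L[ℂ] H,
      IsSynthesis g T ∧ LinearMap.range (T : lp (fun _ : I => ℂ) 2 →ₗ[ℂ] H) = M := by
  obtain ⟨α, hα, hαM⟩ := hM
  have hlow' : ∀ x ∈ M, A * α * ‖x‖ ^ 2 ≤ ∑' i, ‖⟪g i, J x⟫‖ ^ 2 := fun x hx => by
    rw [mul_assoc]
    exact (mul_le_mul_of_nonneg_left (hαM x hx) hA.le).trans (hlow x hx)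
  have hrep := exists_mem_inner_eq_of_coercive M J hα hαM
  -- `hrep` turns each sequence `⟪g i, h⟫` into some `⟪g i, J x⟫` with `x ∈ M`; as `tsum` is `0`
  -- off summability, the lower bound `hlow'` forces the latter to be summable.
  have hsum : ∀ h, Summable fun i => ‖⟪g i, h⟫‖ ^ 2 := by
    intro h
    obtain ⟨x, hx, hxh⟩ := hrep h
    simp only [← hxh _ (hg _)]
    rcases eq_or_ne x 0 with rfl | hx0
    · simp
    exact summable_of_pos_le_tsum (by positivity) (hlow' x hx)
  obtain ⟨C, hC⟩ := exists_analysisOp_of_summable g hsum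
  have hker : ∀ u ∈ Mᗮ, C u = 0 := fun u hu => lp.ext <| funext fun i => by
    rw [hC]
    exact (Submodule.mem_orthogonal M u).mp hu _ (hg i)
  have hbelow : ∀ m ∈ M, A * α / (‖J‖ ^ 2 + 1) * ‖m‖ ^ 2 ≤ ‖C m‖ ^ 2 := by
    intro m hm
    obtain ⟨x, hx, hxm⟩ := hrep m
    have hCm : ‖C m‖ ^ 2 = ∑' i, ‖⟪g i, J x⟫‖ ^ 2 := by
      simp only [norm_sq_analysisOp hC, hxm _ (hg _)]
    have hmx : ‖m‖ ≤ ‖J‖ * ‖x‖ :=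
      (norm_le_of_inner_eq_inner_self (hxm m hm)).trans (J.le_opNorm x)
    calc A * α / (‖J‖ ^ 2 + 1) * ‖m‖ ^ 2
        ≤ A * α / (‖J‖ ^ 2 + 1) * ((‖J‖ ^ 2 + 1) * ‖x‖ ^ 2) := by
          gcongr
          nlinarith [norm_nonneg m, sq_nonneg ‖x‖]
      _ = A * α * ‖x‖ ^ 2 := by field_simp
      _ ≤ ‖C m‖ ^ 2 := hCm ▸ hlow' x hx
  exact ⟨adjoint C, isSynthesis_adjoint hC,
    range_adjoint_eq_of_bounded_below hker (by positivity) hbelow⟩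

theorem exists_synthesis_range_eq_of_frame [CompleteSpace H] {I : Type*}
    (hM : MaxUnifJPos J M) {s : Set I} {f : I → H}
    (hf : ∀ i ∈ s, f i ∈ M) {A : ℝ} (hA : 0 < A)
    (hlow : ∀ g ∈ M, A * (⟪J g, g⟫).re ≤ ∑' i : s, ‖⟪J g, f i⟫‖ ^ 2) :
    ∃ T : lp (fun _ : I => ℂ) 2 →L[ℂ] H,
      IsSynthesis (fun i => if i ∈ s then f i else 0) T ∧
      LinearMap.range (T : lp (fun _ : I => ℂ) 2 →ₗ[ℂ] H) = M := by
  have := hM.isClosed.completeSpace_coe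
  refine exists_synthesis_range_eq_of_lowerBound hM.1 (fun i => ?_) hA fun g hg => ?_
  · by_cases hi : i ∈ s <;> simp [hi, hf]
  · convert hlow g hg using 1
    rw [tsum_subtype s fun i => ‖⟪J g, f i⟫‖ ^ 2]
    congr with i
    by_cases hi : i ∈ s <;> simp [hi, norm_inner_symm]

end Krein

theorem statement0_general {H I : Type*} [NormedAddCommGroup H] [InnerProductSpace ℂ H] [CompleteSpace H]
    (J : H →L[ℂ] H)
    (Mp Mm : Submodule ℂ H) (hMp : MaxUnifJPos J Mp) (hMm : MaxUnifJNeg J Mm)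
    (Ip Im : Set I) (hdisj : Disjoint Ip Im) (hcover : Ip ∪ Im = Set.univ)
    (f : I → H) (hfp : ∀ i ∈ Ip, f i ∈ Mp) (hfm : ∀ i ∈ Im, f i ∈ Mm)
    (Ap Bp : ℝ) (hAp : 0 < Ap)
    (hframeP : ∀ g ∈ Mp,
      Ap * (⟪J g, g⟫).re ≤ ∑' i : Ip, ‖⟪J g, f i⟫‖ ^ 2 ∧
        ∑' i : Ip, ‖⟪J g, f i⟫‖ ^ 2 ≤ Bp * (⟪J g, g⟫).re)
    (Am Bm : ℝ) (hAm : 0 < Am)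
    (hframeM : ∀ g ∈ Mm,
      Am * (-(⟪J g, g⟫).re) ≤ ∑' i : Im, ‖⟪J g, f i⟫‖ ^ 2 ∧
        ∑' i : Im, ‖⟪J g, f i⟫‖ ^ 2 ≤ Bm * (-(⟪J g, g⟫).re)) :
    IsJFrame J f := by
  obtain ⟨Tp, hTp, hTp_range⟩ :=
    exists_synthesis_range_eq_of_frame hMp hfp hAp fun g hg => (hframeP g hg).1
  obtain ⟨Tm, hTm, hTm_range⟩ :=
    exists_synthesis_range_eq_of_frame (maxUnifJPos_neg_iff.mpr hMm) hfm hAm fun g hg => by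
      simpa only [neg_apply, inner_neg_left, Complex.neg_re, norm_neg] using (hframeM g hg).1
  have hsplit : ∀ i, ((if 0 ≤ (⟪J (f i), f i⟫).re then f i else 0) =
      if i ∈ Ip then f i else 0) ∧ ((if 0 ≤ (⟪J (f i), f i⟫).re then 0 else f i) =
      if i ∈ Im then f i else 0) := by
    intro i
    by_cases hi : i ∈ Ip
    · simp [hi, Set.disjoint_left.mp hdisj hi, hMp.1.re_inner_nonneg (hfp i hi)]
    have him : i ∈ Im := (Set.eq_univ_iff_forall.mp hcover i).resolve_left hi
    by_cases hre : 0 ≤ (⟪J (f i), f i⟫).re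
    · simp [hi, him, hMm.1.eq_zero_of_re_inner_nonneg (hfm i him) hre]
    · simp [hi, him, hre]
  refine ⟨Tp + Tm, Tp, Tm, fun i => ?_, fun i => (hTp i).trans (hsplit i).1.symm,
    fun i => (hTm i).trans (hsplit i).2.symm, hTp_range ▸ hMp, hTm_range ▸ hMm⟩
  simp only [add_apply, hTp i, hTm i, ← (hsplit i).1, ← (hsplit i).2]
  split_ifs <;> simp

/-- glueing frames of a maximal dual pair of uniformly definite subspaces
gives a `J`-frame. -/
theorem statement0 {H I : Type*} [NormedAddCommGroup H] [InnerProductSpace ℂ H] [CompleteSpace H]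
    (J : H →L[ℂ] H) (hJsa : IsSelfAdjoint J) (hJsq : J ∘L J = 1)
    (Mp Mm : Submodule ℂ H) (hMp : MaxUnifJPos J Mp) (hMm : MaxUnifJNeg J Mm)
    (Ip Im : Set I) (hdisj : Disjoint Ip Im) (hcover : Ip ∪ Im = Set.univ)
    (f : I → H) (hfp : ∀ i ∈ Ip, f i ∈ Mp) (hfm : ∀ i ∈ Im, f i ∈ Mm)
    (Ap Bp : ℝ) (hAp : 0 < Ap) (hApBp : Ap ≤ Bp)
    (hframeP : ∀ g ∈ Mp,
      Ap * (⟪J g, g⟫).re ≤ ∑' i : Ip, ‖⟪J g, f i⟫‖ ^ 2 ∧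
        ∑' i : Ip, ‖⟪J g, f i⟫‖ ^ 2 ≤ Bp * (⟪J g, g⟫).re)
    (Am Bm : ℝ) (hAm : 0 < Am) (hAmBm : Am ≤ Bm)
    (hframeM : ∀ g ∈ Mm,
      Am * (-(⟪J g, g⟫).re) ≤ ∑' i : Im, ‖⟪J g, f i⟫‖ ^ 2 ∧
        ∑' i : Im, ‖⟪J g, f i⟫‖ ^ 2 ≤ Bm * (-(⟪J g, g⟫).re)) :
    IsJFrame J f :=
  statement0_general J Mp Mm hMp hMm Ip Im hdisj hcover f hfp hfm Ap Bp hAp hframeP Am Bm hAm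
    hframeM

end KreinFrames
end
end

section
/- Let F = (f_i)_{i∈I} be a J-frame for a Krein space H, with M₊ = R(T₊) and M₋ = R(T₋). Let α₊ > 0 be the definiteness bound of M₊, i.e. the largest constant with α₊‖f‖² ≤ [f,f] for all f ∈ M₊, and α₋ > 0 the definiteness bound of M₋, i.e. the largest constant with [f,f] ≤ −α₋‖f‖² for all f ∈ M₋. Then for every f ∈ M₊, γ(T₊)² α₊² [f,f] ≤ Σ_{i∈I₊} |[f, f_i]|² ≤ (‖T₊‖²/α₊) [f,f], and for every f ∈ M₋, γ(T₋)² α₋² (−[f,f]) ≤ Σ_{i∈I₋} |[f, f_i]|² ≤ (‖T₋‖²/α₋) (−[f,f]). -/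
/- Frames for Krein spaces ("J-frames"), following Giribet–Maestripieri–Martínez Pería–Massey.

A Krein space is modelled as a complex Hilbert space `H` together with a fundamental symmetry
`J : H →L[ℂ] H` (selfadjoint, `J ∘L J = 1`); the indefinite inner product is `[x,y] = ⟪J x, y⟫`. -/

noncomputable section

open scoped ComplexInnerProductSpace ComplexOrder
open ContinuousLinearMap

attribute [local instance] Classical.propDecidable

namespace KreinFrames

universe u

variable {H : Type*} [NormedAddCommGroup H] [InnerProductSpace ℂ H]

/-! Write `w = J g` on the positive side and `w = -J g` on the negative side, so that `‖w‖ = ‖g‖`,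
`α ‖g‖² ≤ Re ⟪w, g⟫`, and the sum over the subfamily is `‖T^* w‖²` for its synthesis operator `T`.
The upper bound is `‖T^* w‖ ≤ ‖T‖ ‖g‖`. For the lower bound write `g = T x` with `x ⊥ ker T`, so
that `γ(T) ‖x‖ ≤ ‖g‖`; then `γ(T) α ‖g‖² ≤ γ(T) Re ⟪T^* w, x⟫ ≤ ‖T^* w‖ ‖g‖`, which gives
`γ(T) α ‖g‖ ≤ ‖T^* w‖`, and it remains to use `Re ⟪w, g⟫ ≤ ‖g‖²`. -/

section ReducedMinimumModulus

variable {E F : Type*} [NormedAddCommGroup E] [InnerProductSpace ℂ E]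
  [NormedAddCommGroup F] [InnerProductSpace ℂ F]

lemma rmm_nonneg (A : E →L[ℂ] F) : 0 ≤ rmm A :=
  Real.sInf_nonneg fun _ ⟨_, _, _, hr⟩ => hr ▸ norm_nonneg _

lemma rmm_mul_norm_le (A : E →L[ℂ] F) {x : E} (hx : x ∈ (LinearMap.ker (A : E →ₗ[ℂ] F))ᗮ) :
    rmm A * ‖x‖ ≤ ‖A x‖ := by
  rcases eq_or_ne x 0 with rfl | hx0
  · simp
  have hxpos : 0 < ‖x‖ := norm_pos_iff.mpr hx0
  have hunit : rmm A ≤ ‖A ((‖x‖⁻¹ : ℂ) • x)‖ :=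
    csInf_le ⟨0, fun _ ⟨_, _, _, hr⟩ => hr ▸ norm_nonneg _⟩
      ⟨_, Submodule.smul_mem _ _ hx, norm_smul_inv_norm hx0, rfl⟩
  rw [map_smul, norm_smul, norm_inv, Complex.norm_real, Real.norm_of_nonneg hxpos.le] at hunit
  rwa [← le_div_iff₀ hxpos, div_eq_inv_mul]

lemma exists_mem_orthogonal_ker_apply_eq [CompleteSpace E] (A : E →L[ℂ] F) {g : F}
    (hg : g ∈ LinearMap.range (A : E →ₗ[ℂ] F)) :
    ∃ x ∈ (LinearMap.ker (A : E →ₗ[ℂ] F))ᗮ, A x = g := by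
  obtain ⟨y, rfl⟩ := hg
  have : CompleteSpace (LinearMap.ker (A : E →ₗ[ℂ] F)) := A.isClosed_ker.completeSpace_coe
  obtain ⟨k, hk, x, hx, rfl⟩ := (LinearMap.ker (A : E →ₗ[ℂ] F)).exists_add_mem_mem_orthogonal y
  exact ⟨x, hx, by simp [show A k = 0 from hk]⟩

variable [CompleteSpace E] [CompleteSpace F]

lemma rmm_mul_re_inner_le (A : E →L[ℂ] F) {g : F} (hg : g ∈ LinearMap.range (A : E →ₗ[ℂ] F))
    (w : F) : rmm A * (⟪w, g⟫).re ≤ ‖adjoint A w‖ * ‖g‖ := by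
  obtain ⟨x, hx, rfl⟩ := exists_mem_orthogonal_ker_apply_eq A hg
  calc rmm A * (⟪w, A x⟫).re
      = rmm A * (⟪adjoint A w, x⟫).re := by rw [adjoint_inner_left]
    _ ≤ rmm A * (‖adjoint A w‖ * ‖x‖) :=
        mul_le_mul_of_nonneg_left (re_inner_le_norm (𝕜 := ℂ) _ _) (rmm_nonneg A)
    _ = ‖adjoint A w‖ * (rmm A * ‖x‖) := by ring
    _ ≤ ‖adjoint A w‖ * ‖A x‖ := mul_le_mul_of_nonneg_left (rmm_mul_norm_le A hx) (norm_nonneg _)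

lemma rmm_mul_mul_norm_le_norm_adjoint (A : E →L[ℂ] F) {g w : F}
    (hg : g ∈ LinearMap.range (A : E →ₗ[ℂ] F)) {α : ℝ} (hα : α * ‖g‖ ^ 2 ≤ (⟪w, g⟫).re) :
    rmm A * α * ‖g‖ ≤ ‖adjoint A w‖ := by
  rcases eq_or_ne g 0 with rfl | hg0
  · simp
  have hgpos : 0 < ‖g‖ := norm_pos_iff.mpr hg0
  refine le_of_mul_le_mul_right ?_ hgpos
  calc rmm A * α * ‖g‖ * ‖g‖ = rmm A * (α * ‖g‖ ^ 2) := by ring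
    _ ≤ rmm A * (⟪w, g⟫).re := mul_le_mul_of_nonneg_left hα (rmm_nonneg A)
    _ ≤ ‖adjoint A w‖ * ‖g‖ := rmm_mul_re_inner_le A hg w

lemma sq_rmm_mul_sq_mul_re_inner_le (A : E →L[ℂ] F) {g w : F}
    (hg : g ∈ LinearMap.range (A : E →ₗ[ℂ] F)) (hw : ‖w‖ ≤ ‖g‖) {α : ℝ} (hα0 : 0 ≤ α)
    (hα : α * ‖g‖ ^ 2 ≤ (⟪w, g⟫).re) :
    rmm A ^ 2 * α ^ 2 * (⟪w, g⟫).re ≤ ‖adjoint A w‖ ^ 2 := by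
  have hinner : (⟪w, g⟫).re ≤ ‖g‖ ^ 2 :=
    (re_inner_le_norm (𝕜 := ℂ) w g).trans
      ((mul_le_mul_of_nonneg_right hw (norm_nonneg g)).trans_eq (sq _).symm)
  calc rmm A ^ 2 * α ^ 2 * (⟪w, g⟫).re ≤ rmm A ^ 2 * α ^ 2 * ‖g‖ ^ 2 :=
        mul_le_mul_of_nonneg_left hinner (by positivity)
    _ = (rmm A * α * ‖g‖) ^ 2 := by ring
    _ ≤ ‖adjoint A w‖ ^ 2 :=
        pow_le_pow_left₀ (by have := rmm_nonneg A; positivity)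
          (rmm_mul_mul_norm_le_norm_adjoint A hg hα) 2

lemma norm_adjoint_sq_le (A : E →L[ℂ] F) {g w : F} (hw : ‖w‖ ≤ ‖g‖) {α : ℝ} (hα0 : 0 < α)
    (hα : α * ‖g‖ ^ 2 ≤ (⟪w, g⟫).re) :
    ‖adjoint A w‖ ^ 2 ≤ ‖A‖ ^ 2 / α * (⟪w, g⟫).re := by
  have hAw : ‖adjoint A w‖ ≤ ‖A‖ * ‖g‖ :=
    calc ‖adjoint A w‖ ≤ ‖adjoint A‖ * ‖w‖ := le_opNorm _ _
      _ ≤ ‖A‖ * ‖g‖ := by rw [adjoint.norm_map]; gcongr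
  rw [div_mul_eq_mul_div, le_div_iff₀ hα0]
  calc ‖adjoint A w‖ ^ 2 * α ≤ (‖A‖ * ‖g‖) ^ 2 * α := by gcongr
    _ = ‖A‖ ^ 2 * (α * ‖g‖ ^ 2) := by ring
    _ ≤ ‖A‖ ^ 2 * (⟪w, g⟫).re := by gcongr

end ReducedMinimumModulus

lemma lp_two_norm_sq_eq_tsum {I : Type*} {E : I → Type*} [∀ i, NormedAddCommGroup (E i)]
    (x : lp E 2) : ‖x‖ ^ 2 = ∑' i, ‖x i‖ ^ 2 := by
  have h := lp.norm_rpow_eq_tsum (p := 2) (by norm_num) x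
  norm_num at h
  exact_mod_cast h

section Synthesis

variable [CompleteSpace H] {I : Type*} {φ : I → H} {A : lp (fun _ : I => ℂ) 2 →L[ℂ] H}

lemma IsSynthesis.adjoint_apply (hA : IsSynthesis φ A) (h : H) (i : I) :
    adjoint A h i = ⟪φ i, h⟫ := by
  have hi := lp.inner_single_left (𝕜 := ℂ) i 1 (adjoint A h)
  rw [adjoint_inner_right, hA i] at hi
  simpa using hi.symm

lemma IsSynthesis.tsum_norm_inner_sq (hA : IsSynthesis φ A) (h : H) :
    ∑' i, ‖⟪h, φ i⟫‖ ^ 2 = ‖adjoint A h‖ ^ 2 := by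
  rw [lp_two_norm_sq_eq_tsum]
  exact tsum_congr fun i => by rw [hA.adjoint_apply, norm_inner_symm]

lemma IsSynthesis.tsum_subtype_norm_inner_sq {f : I → H} {p : I → Prop} (hA : IsSynthesis φ A)
    (hpos : ∀ i, p i → φ i = f i) (hneg : ∀ i, ¬ p i → φ i = 0) (h : H) :
    ∑' i : {j // p j}, ‖⟪h, f i⟫‖ ^ 2 = ‖adjoint A h‖ ^ 2 := by
  have hsupp : Function.support (fun i => ‖⟪h, φ i⟫‖ ^ 2) ⊆ {j | p j} := fun i hi => by
    by_contra hpi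
    exact hi (by simp [hneg i hpi])
  rw [← hA.tsum_norm_inner_sq, ← tsum_subtype_eq_of_support_subset hsupp]
  exact tsum_congr fun i => by rw [hpos i i.2]

end Synthesis

lemma norm_map_of_isSelfAdjoint_of_comp_self [CompleteSpace H] {J : H →L[ℂ] H}
    (hJsa : IsSelfAdjoint J) (hJsq : J ∘L J = 1) (x : H) : ‖J x‖ = ‖x‖ := by
  have hJJ : J * J = 1 := hJsq
  have hJ : J ∈ unitary (H →L[ℂ] H) :=
    Unitary.mem_iff.mpr ⟨by rw [hJsa.star_eq, hJJ], by rw [hJsa.star_eq, hJJ]⟩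
  exact norm_map_of_mem_unitary hJ x

theorem statement2_general {H I : Type*} [NormedAddCommGroup H] [InnerProductSpace ℂ H] [CompleteSpace H]
    (J : H →L[ℂ] H) (hJsa : IsSelfAdjoint J) (hJsq : J ∘L J = 1)
    (f : I → H) (Tp Tm : lp (fun _ : I => ℂ) 2 →L[ℂ] H)
    (hTp : IsSynthesis (fun i => if 0 ≤ (⟪J (f i), f i⟫).re then f i else 0) Tp)
    (hTm : IsSynthesis (fun i => if 0 ≤ (⟪J (f i), f i⟫).re then 0 else f i) Tm)
    (αp : ℝ) (hαp0 : 0 < αp)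
    (hαp : ∀ g ∈ LinearMap.range (Tp : lp (fun _ : I => ℂ) 2 →ₗ[ℂ] H), αp * ‖g‖ ^ 2 ≤ (⟪J g, g⟫).re)
    (αm : ℝ) (hαm0 : 0 < αm)
    (hαm : ∀ g ∈ LinearMap.range (Tm : lp (fun _ : I => ℂ) 2 →ₗ[ℂ] H), (⟪J g, g⟫).re ≤ -(αm * ‖g‖ ^ 2)) :
    (∀ g ∈ LinearMap.range (Tp : lp (fun _ : I => ℂ) 2 →ₗ[ℂ] H),
      rmm Tp ^ 2 * αp ^ 2 * (⟪J g, g⟫).re ≤ ∑' i : {j : I // 0 ≤ (⟪J (f j), f j⟫).re}, ‖⟪J g, f i⟫‖ ^ 2 ∧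
        ∑' i : {j : I // 0 ≤ (⟪J (f j), f j⟫).re}, ‖⟪J g, f i⟫‖ ^ 2 ≤ ‖Tp‖ ^ 2 / αp * (⟪J g, g⟫).re) ∧
    (∀ g ∈ LinearMap.range (Tm : lp (fun _ : I => ℂ) 2 →ₗ[ℂ] H),
      rmm Tm ^ 2 * αm ^ 2 * (-(⟪J g, g⟫).re) ≤ ∑' i : {j : I // ¬ 0 ≤ (⟪J (f j), f j⟫).re}, ‖⟪J g, f i⟫‖ ^ 2 ∧
        ∑' i : {j : I // ¬ 0 ≤ (⟪J (f j), f j⟫).re}, ‖⟪J g, f i⟫‖ ^ 2 ≤ ‖Tm‖ ^ 2 / αm * (-(⟪J g, g⟫).re)) := by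
  have hJ := norm_map_of_isSelfAdjoint_of_comp_self hJsa hJsq
  refine ⟨fun g hg => ?_, fun g hg => ?_⟩
  · rw [hTp.tsum_subtype_norm_inner_sq (fun i hi => if_pos hi) (fun i hi => if_neg hi)]
    exact ⟨sq_rmm_mul_sq_mul_re_inner_le Tp hg (hJ g).le hαp0.le (hαp g hg),
      norm_adjoint_sq_le Tp (hJ g).le hαp0 (hαp g hg)⟩
  · have hre : (⟪-J g, g⟫).re = -(⟪J g, g⟫).re := by simp
    have hαm' : αm * ‖g‖ ^ 2 ≤ (⟪-J g, g⟫).re := by rw [hre]; linarith [hαm g hg]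
    have hnorm : ‖-J g‖ ≤ ‖g‖ := by rw [norm_neg, hJ]
    have hadj : ‖adjoint Tm (J g)‖ = ‖adjoint Tm (-J g)‖ := by rw [map_neg, norm_neg]
    rw [hTm.tsum_subtype_norm_inner_sq (fun i hi => if_neg hi) (fun i hi => if_pos (not_not.mp hi)),
      hadj, ← hre]
    exact ⟨sq_rmm_mul_sq_mul_re_inner_le Tm hg hnorm hαm0.le hαm',
      norm_adjoint_sq_le Tm hnorm hαm0 hαm'⟩

/-- explicit frame bounds for the subfamilies of a `J`-frame in terms of the
reduced minimum modulus, the norms of `T±` and the definiteness bounds `α±`. -/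
theorem statement2 {H I : Type*} [NormedAddCommGroup H] [InnerProductSpace ℂ H] [CompleteSpace H]
    (J : H →L[ℂ] H) (hJsa : IsSelfAdjoint J) (hJsq : J ∘L J = 1)
    (f : I → H) (T Tp Tm : lp (fun _ : I => ℂ) 2 →L[ℂ] H)
    (hT : IsSynthesis f T)
    (hTp : IsSynthesis (fun i => if 0 ≤ (⟪J (f i), f i⟫).re then f i else 0) Tp)
    (hTm : IsSynthesis (fun i => if 0 ≤ (⟪J (f i), f i⟫).re then 0 else f i) Tm)
    (hmaxp : MaxUnifJPos J (LinearMap.range (Tp : lp (fun _ : I => ℂ) 2 →ₗ[ℂ] H)))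
    (hmaxm : MaxUnifJNeg J (LinearMap.range (Tm : lp (fun _ : I => ℂ) 2 →ₗ[ℂ] H)))
    (αp : ℝ) (hαp0 : 0 < αp)
    (hαp : ∀ g ∈ LinearMap.range (Tp : lp (fun _ : I => ℂ) 2 →ₗ[ℂ] H), αp * ‖g‖ ^ 2 ≤ (⟪J g, g⟫).re)
    (hαpmax : ∀ β : ℝ, (∀ g ∈ LinearMap.range (Tp : lp (fun _ : I => ℂ) 2 →ₗ[ℂ] H), β * ‖g‖ ^ 2 ≤ (⟪J g, g⟫).re) → β ≤ αp)
    (αm : ℝ) (hαm0 : 0 < αm)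
    (hαm : ∀ g ∈ LinearMap.range (Tm : lp (fun _ : I => ℂ) 2 →ₗ[ℂ] H), (⟪J g, g⟫).re ≤ -(αm * ‖g‖ ^ 2))
    (hαmmax : ∀ β : ℝ, (∀ g ∈ LinearMap.range (Tm : lp (fun _ : I => ℂ) 2 →ₗ[ℂ] H), (⟪J g, g⟫).re ≤ -(β * ‖g‖ ^ 2)) → β ≤ αm) :
    (∀ g ∈ LinearMap.range (Tp : lp (fun _ : I => ℂ) 2 →ₗ[ℂ] H),
      rmm Tp ^ 2 * αp ^ 2 * (⟪J g, g⟫).re ≤ ∑' i : {j : I // 0 ≤ (⟪J (f j), f j⟫).re}, ‖⟪J g, f i⟫‖ ^ 2 ∧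
        ∑' i : {j : I // 0 ≤ (⟪J (f j), f j⟫).re}, ‖⟪J g, f i⟫‖ ^ 2 ≤ ‖Tp‖ ^ 2 / αp * (⟪J g, g⟫).re) ∧
    (∀ g ∈ LinearMap.range (Tm : lp (fun _ : I => ℂ) 2 →ₗ[ℂ] H),
      rmm Tm ^ 2 * αm ^ 2 * (-(⟪J g, g⟫).re) ≤ ∑' i : {j : I // ¬ 0 ≤ (⟪J (f j), f j⟫).re}, ‖⟪J g, f i⟫‖ ^ 2 ∧
        ∑' i : {j : I // ¬ 0 ≤ (⟪J (f j), f j⟫).re}, ‖⟪J g, f i⟫‖ ^ 2 ≤ ‖Tm‖ ^ 2 / αm * (-(⟪J g, g⟫).re)) :=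
  statement2_general J hJsa hJsq f Tp Tm hTp hTm αp hαp0 hαp αm hαm0 hαm

end KreinFrames
end
end

section
/- Let F = (f_i)_{i∈I} be a Bessel family in a Krein space H, let M be the closed linear span of {f_i : i ∈ I} and N = M ∩ M^{[⊥]}. If there exist constants 0 < A ≤ B such that A[f,f] ≤ Σ_{i∈I} |[f, f_i]|² ≤ B[f,f] for every f ∈ M, then M ⊖ N := M ∩ N^⊥ is a closed uniformly J-positive subspace of H. -/
/- Frames for Krein spaces ("J-frames"), following Giribet–Maestripieri–Martínez Pería–Massey.

A Krein space is modelled as a complex Hilbert space `H` together with a fundamental symmetry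
`J : H →L[ℂ] H` (selfadjoint, `J ∘L J = 1`); the indefinite inner product is `[x,y] = ⟪J x, y⟫`. -/

noncomputable section

open scoped ComplexInnerProductSpace ComplexOrder
open ContinuousLinearMap

attribute [local instance] Classical.propDecidable

namespace ContinuousLinearMap.IsPositive

variable {𝕜 E : Type*} [RCLike 𝕜] [NormedAddCommGroup E] [InnerProductSpace 𝕜 E] {T : E →L[𝕜] E}

local notation "⟪" x ", " y "⟫" => inner 𝕜 x y

theorem norm_inner_sq_le (hT : T.IsPositive) (x y : E) :
    ‖⟪T x, y⟫‖ ^ 2 ≤ RCLike.re ⟪T x, x⟫ * RCLike.re ⟪T y, y⟫ := by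
  let c : PreInnerProductSpace.Core 𝕜 E :=
    { inner := fun x y => ⟪T x, y⟫
      conj_inner_symm := fun x y => by rw [inner_conj_symm, hT.inner_left_eq_inner_right]
      re_inner_nonneg := hT.re_inner_nonneg_left
      add_left := fun x y z => by rw [map_add, inner_add_left]
      smul_left := fun x y r => by rw [map_smul, inner_smul_left] }
  have h := @InnerProductSpace.Core.inner_mul_inner_self_le 𝕜 E _ _ _ c x y
  change ‖⟪T x, y⟫‖ * ‖⟪T y, x⟫‖ ≤ RCLike.re ⟪T x, x⟫ * RCLike.re ⟪T y, y⟫ at h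
  rwa [norm_inner_symm (T y), ← hT.inner_left_eq_inner_right, ← sq] at h

theorem mul_norm_sq_apply_le (hT : T.IsPositive) {A C : ℝ} (hA : 0 ≤ A)
    (hTC : ∀ x, A * RCLike.re ⟪T x, x⟫ ≤ C * ‖T x‖ ^ 2) (x : E) :
    A * ‖T x‖ ^ 2 ≤ C * RCLike.re ⟪T (T x), T x⟫ := by
  rcases eq_or_ne (T x) 0 with hx | hx
  · simp [hx]
  have hcs := hT.norm_inner_sq_le (T x) x
  rw [hT.inner_left_eq_inner_right, inner_self_eq_norm_sq_to_K, norm_pow,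
    RCLike.norm_ofReal, abs_norm] at hcs
  have hTx : 0 < ‖T x‖ ^ 2 := by positivity
  have hq : 0 ≤ RCLike.re ⟪T (T x), T x⟫ := hT.re_inner_nonneg_left (T x)
  refine le_of_mul_le_mul_right ?_ hTx
  calc A * ‖T x‖ ^ 2 * ‖T x‖ ^ 2 ≤ A * (RCLike.re ⟪T (T x), T x⟫ * RCLike.re ⟪T x, x⟫) := by
        rw [mul_assoc, ← sq]; exact mul_le_mul_of_nonneg_left hcs hA
    _ = RCLike.re ⟪T (T x), T x⟫ * (A * RCLike.re ⟪T x, x⟫) := by ring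
    _ ≤ RCLike.re ⟪T (T x), T x⟫ * (C * ‖T x‖ ^ 2) := mul_le_mul_of_nonneg_left (hTC x) hq
    _ = C * RCLike.re ⟪T (T x), T x⟫ * ‖T x‖ ^ 2 := by ring

theorem mul_norm_sq_le_of_mem_closure_range (hT : T.IsPositive) {A C : ℝ}
    (hA : 0 ≤ A) (hTC : ∀ x, A * RCLike.re ⟪T x, x⟫ ≤ C * ‖T x‖ ^ 2) {y : E}
    (hy : y ∈ T.range.topologicalClosure) :
    A * ‖y‖ ^ 2 ≤ C * RCLike.re ⟪T y, y⟫ := by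
  have hclosed : IsClosed {y : E | A * ‖y‖ ^ 2 ≤ C * RCLike.re ⟪T y, y⟫} := by
    apply isClosed_le <;> fun_prop
  rw [← SetLike.mem_coe, Submodule.topologicalClosure_coe] at hy
  refine closure_minimal ?_ hclosed hy
  rintro _ ⟨x, rfl⟩
  exact hT.mul_norm_sq_apply_le hA hTC x

end ContinuousLinearMap.IsPositive

theorem IsSelfAdjoint.le_topologicalClosure_range {𝕜 E : Type*} [RCLike 𝕜] [NormedAddCommGroup E]
    [InnerProductSpace 𝕜 E] [CompleteSpace E] {T : E →L[𝕜] E} (hT : IsSelfAdjoint T)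
    {K : Submodule 𝕜 E} (hK : T.ker ≤ Kᗮ) : K ≤ T.range.topologicalClosure := by
  rw [← hT.adjoint_eq, ← ContinuousLinearMap.orthogonal_ker]
  exact K.le_orthogonal_orthogonal.trans (Submodule.orthogonal_le hK)

theorem Submodule.sub_starProjection_inf_orthogonal_mem {𝕜 E : Type*} [RCLike 𝕜]
    [NormedAddCommGroup E] [InnerProductSpace 𝕜 E] {M N : Submodule 𝕜 E}
    [N.HasOrthogonalProjection] [(M ⊓ Nᗮ).HasOrthogonalProjection] (hNM : N ≤ M) {x : E}
    (hx : x ∈ M) : x - (M ⊓ Nᗮ).starProjection x ∈ N := by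
  have hPx : (M ⊓ Nᗮ).starProjection x = x - N.starProjection x := by
    refine Submodule.eq_starProjection_of_mem_orthogonal
      ⟨M.sub_mem hx (hNM (N.starProjection_apply_mem x)), N.sub_starProjection_mem_orthogonal x⟩ ?_
    rw [sub_sub_cancel]
    exact Submodule.orthogonal_le inf_le_right
      (N.le_orthogonal_orthogonal (N.starProjection_apply_mem x))
  rw [hPx, sub_sub_cancel]
  exact N.starProjection_apply_mem x

namespace KreinFrames

variable {H : Type*} [NormedAddCommGroup H] [InnerProductSpace ℂ H]

theorem isClosed_Jorth (J : H →L[ℂ] H) (M : Submodule ℂ H) : IsClosed (Jorth J M : Set H) := by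
  have hJorth : (Jorth J M : Set H) = ⋂ m ∈ M, {x | ⟪J x, m⟫ = 0} := by
    ext x
    simp only [Set.mem_iInter, Set.mem_ofPred_eq, SetLike.mem_coe]
    rfl
  rw [hJorth]
  exact isClosed_biInter fun m _ => isClosed_eq (by fun_prop) continuous_const

theorem mem_Jorth_topologicalClosure_span {J : H →L[ℂ] H} {s : Set H} {x : H}
    (hx : ∀ m ∈ s, ⟪J x, m⟫ = 0) : x ∈ Jorth J (Submodule.span ℂ s).topologicalClosure := by
  have hker : (Submodule.span ℂ s).topologicalClosure ≤ (innerSL ℂ (J x)).ker :=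
    Submodule.topologicalClosure_minimal _ (Submodule.span_le.mpr hx)
      (ContinuousLinearMap.isClosed_ker _)
  exact fun m hm => hker hm

variable [CompleteSpace H]

theorem isPositive_starProjection_comp_comp {J : H →L[ℂ] H} (hJ : IsSelfAdjoint J)
    {K M : Submodule ℂ H} [K.HasOrthogonalProjection] (hKM : K ≤ M)
    (hJM : ∀ m ∈ M, 0 ≤ (⟪J m, m⟫).re) :
    (K.starProjection ∘L J ∘L K.starProjection).IsPositive := by
  refine isPositive_def'.mpr ⟨hJ.conj_starProjection K, fun x => ?_⟩
  rw [reApplyInnerSelf_apply, comp_apply, comp_apply, K.inner_starProjection_left_eq_right]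
  exact hJM _ (hKM (K.starProjection_apply_mem x))

section FrameInequalities

variable {I : Type*} {J : H →L[ℂ] H} {M N : Submodule ℂ H} [N.HasOrthogonalProjection]
  [(M ⊓ Nᗮ).HasOrthogonalProjection]

/-- `M = (M ⊓ Nᗮ) ⊕ N` and `N` is `J`-orthogonal to `M`, so on `M` the form `[g, ·]` only sees
the component in `M ⊓ Nᗮ`. -/
theorem inner_apply_eq_inner_starProjection_apply (hJ : IsSelfAdjoint J) (hNM : N ≤ M)
    (hNJ : N ≤ Jorth J M) {g m : H} (hg : g ∈ M) (hm : m ∈ M) :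
    ⟪J g, m⟫ = ⟪(M ⊓ Nᗮ).starProjection (J g), m⟫ := by
  have hJorth : ⟪J g, m - (M ⊓ Nᗮ).starProjection m⟫ = 0 :=
    calc ⟪J g, m - (M ⊓ Nᗮ).starProjection m⟫
        = ⟪g, J (m - (M ⊓ Nᗮ).starProjection m)⟫ := hJ.isSymmetric _ _
      _ = 0 := by
        rw [← inner_conj_symm, hNJ (Submodule.sub_starProjection_inf_orthogonal_mem hNM hm) g hg,
          map_zero]
  rw [(M ⊓ Nᗮ).inner_starProjection_left_eq_right, ← sub_eq_zero, ← inner_sub_right, hJorth]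

theorem mul_re_inner_le_of_bessel (hJ : IsSelfAdjoint J) (hNM : N ≤ M) (hNJ : N ≤ Jorth J M)
    {f : I → H} (hfM : ∀ i, f i ∈ M) {A B0 : ℝ}
    (hBessel : ∀ g : H, ∑' i, ‖⟪g, f i⟫‖ ^ 2 ≤ B0 * ‖g‖ ^ 2)
    (hlower : ∀ g ∈ M, A * (⟪J g, g⟫).re ≤ ∑' i, ‖⟪J g, f i⟫‖ ^ 2) (x : H) :
    A * (⟪((M ⊓ Nᗮ).starProjection ∘L J ∘L (M ⊓ Nᗮ).starProjection) x, x⟫).re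
      ≤ B0 * ‖((M ⊓ Nᗮ).starProjection ∘L J ∘L (M ⊓ Nᗮ).starProjection) x‖ ^ 2 := by
  set P := (M ⊓ Nᗮ).starProjection
  have hPx : P x ∈ M := ((M ⊓ Nᗮ).starProjection_apply_mem x).1
  calc A * (⟪(P ∘L J ∘L P) x, x⟫).re = A * (⟪J (P x), P x⟫).re := by
        rw [comp_apply, comp_apply, (M ⊓ Nᗮ).inner_starProjection_left_eq_right]
    _ ≤ ∑' i, ‖⟪J (P x), f i⟫‖ ^ 2 := hlower _ hPx
    _ = ∑' i, ‖⟪(P ∘L J ∘L P) x, f i⟫‖ ^ 2 := tsum_congr fun i => by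
        rw [inner_apply_eq_inner_starProjection_apply hJ hNM hNJ hPx (hfM i)]; rfl
    _ ≤ B0 * ‖(P ∘L J ∘L P) x‖ ^ 2 := hBessel _

theorem ker_starProjection_comp_comp_le (hJ : IsSelfAdjoint J) {f : I → H}
    (hM : M = (Submodule.span ℂ (Set.range f)).topologicalClosure) (hfM : ∀ i, f i ∈ M)
    (hN : N = M ⊓ Jorth J M) :
    ((M ⊓ Nᗮ).starProjection ∘L J ∘L (M ⊓ Nᗮ).starProjection).ker ≤ (M ⊓ Nᗮ)ᗮ := by
  intro x hx
  set P := (M ⊓ Nᗮ).starProjection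
  have hPx : P x ∈ M ⊓ Nᗮ := (M ⊓ Nᗮ).starProjection_apply_mem x
  have hPxJ : P x ∈ Jorth J M := by
    rw [hM]
    refine mem_Jorth_topologicalClosure_span ?_
    rintro _ ⟨i, rfl⟩
    rw [inner_apply_eq_inner_starProjection_apply hJ (hN.le.trans inf_le_left)
      (hN.le.trans inf_le_right) hPx.1 (hfM i)]
    exact (congrArg (⟪·, f i⟫) hx).trans (inner_zero_left _)
  have hPxN : P x ∈ N := hN ▸ ⟨hPx.1, hPxJ⟩
  rw [← (M ⊓ Nᗮ).starProjection_apply_eq_zero_iff]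
  simpa using N.orthogonal_disjoint.le_bot ⟨hPxN, hPx.2⟩

end FrameInequalities

theorem statement3_general {H I : Type*} [NormedAddCommGroup H] [InnerProductSpace ℂ H] [CompleteSpace H]
    (J : H →L[ℂ] H) (hJsa : IsSelfAdjoint J)
    (f : I → H) (B0 : ℝ) (hB0 : 0 < B0)
    (hBessel : ∀ g : H, ∑' i, ‖⟪g, f i⟫‖ ^ 2 ≤ B0 * ‖g‖ ^ 2)
    (M N : Submodule ℂ H)
    (hM : M = (Submodule.span ℂ (Set.range f)).topologicalClosure)
    (hN : N = M ⊓ Jorth J M)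
    (A B : ℝ) (hA : 0 < A) (hAB : A ≤ B)
    (hineq : ∀ g ∈ M, A * (⟪J g, g⟫).re ≤ ∑' i, ‖⟪J g, f i⟫‖ ^ 2 ∧
      ∑' i, ‖⟪J g, f i⟫‖ ^ 2 ≤ B * (⟪J g, g⟫).re) :
    IsClosed ((M ⊓ Nᗮ : Submodule ℂ H) : Set H) ∧ UnifJPos J (M ⊓ Nᗮ) := by
  have hMc : IsClosed (M : Set H) := hM ▸ Submodule.isClosed_topologicalClosure _
  have hNc : IsClosed (N : Set H) := hN ▸ hMc.inter (isClosed_Jorth J M)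
  have hM'c : IsClosed ((M ⊓ Nᗮ : Submodule ℂ H) : Set H) := hMc.inter N.isClosed_orthogonal
  have : CompleteSpace N := hNc.completeSpace_coe
  have : CompleteSpace (M ⊓ Nᗮ : Submodule ℂ H) := hM'c.completeSpace_coe
  have hfM : ∀ i, f i ∈ M := fun i =>
    hM ▸ Submodule.le_topologicalClosure _ (Submodule.subset_span (Set.mem_range_self i))
  have hJM : ∀ g ∈ M, 0 ≤ (⟪J g, g⟫).re := fun g hg => by
    have hsum : 0 ≤ ∑' i, ‖⟪J g, f i⟫‖ ^ 2 := tsum_nonneg fun i => by positivity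
    nlinarith [(hineq g hg).2]
  set P := (M ⊓ Nᗮ).starProjection
  have hG : (P ∘L J ∘L P).IsPositive := isPositive_starProjection_comp_comp hJsa inf_le_left hJM
  have hframe := mul_re_inner_le_of_bessel hJsa (hN.le.trans inf_le_left)
    (hN.le.trans inf_le_right) hfM hBessel fun g hg => (hineq g hg).1
  have hdense : M ⊓ Nᗮ ≤ (P ∘L J ∘L P).range.topologicalClosure :=
    hG.isSelfAdjoint.le_topologicalClosure_range (ker_starProjection_comp_comp_le hJsa hM hfM hN)
  refine ⟨hM'c, A / B0, div_pos hA hB0, fun g hg => ?_⟩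
  have hbound := hG.mul_norm_sq_le_of_mem_closure_range hA.le hframe (hdense hg)
  rw [comp_apply, comp_apply, (M ⊓ Nᗮ).inner_starProjection_left_eq_right,
    Submodule.starProjection_eq_self_iff.mpr hg] at hbound
  rw [div_mul_eq_mul_div, div_le_iff₀ hB0, mul_comm _ B0]
  exact hbound

/-- if a Bessel family satisfies the indefinite frame inequalities on
`M = span {f_i}`, then `M ⊖ N` (with `N = M ∩ M^{[⊥]}`) is closed and uniformly `J`-positive. -/
theorem statement3 {H I : Type*} [NormedAddCommGroup H] [InnerProductSpace ℂ H] [CompleteSpace H]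
    (J : H →L[ℂ] H) (hJsa : IsSelfAdjoint J) (hJsq : J ∘L J = 1)
    (f : I → H) (B0 : ℝ) (hB0 : 0 < B0)
    (hBessel : ∀ g : H, ∑' i, ‖⟪g, f i⟫‖ ^ 2 ≤ B0 * ‖g‖ ^ 2)
    (M N : Submodule ℂ H)
    (hM : M = (Submodule.span ℂ (Set.range f)).topologicalClosure)
    (hN : N = M ⊓ Jorth J M)
    (A B : ℝ) (hA : 0 < A) (hAB : A ≤ B)
    (hineq : ∀ g ∈ M, A * (⟪J g, g⟫).re ≤ ∑' i, ‖⟪J g, f i⟫‖ ^ 2 ∧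
      ∑' i, ‖⟪J g, f i⟫‖ ^ 2 ≤ B * (⟪J g, g⟫).re) :
    IsClosed ((M ⊓ Nᗮ : Submodule ℂ H) : Set H) ∧ UnifJPos J (M ⊓ Nᗮ) :=
  statement3_general J hJsa f B0 hB0 hBessel M N hM hN A B hA hAB hineq

end KreinFrames
end
end

section
/- Let H be a Krein space with fundamental symmetry J and fundamental decomposition H = H₊ ⊕ H₋, where H± = ker(J ∓ I); assume H₊ ≠ {0} and H₋ ≠ {0}. Let m ∈ H with ‖m‖ = 1 and write m = m⁺ + m⁻ with m± ∈ H±. Then sup{|⟨m, n⟩| : n ∈ C, ‖n‖ = 1} = (1/√2)(‖m⁺‖ + ‖m⁻‖), where C = {n ∈ H : [n,n] = 0} is the cone of neutral vectors. -/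
/- Frames for Krein spaces ("J-frames"), following Giribet–Maestripieri–Martínez Pería–Massey.

A Krein space is modelled as a complex Hilbert space `H` together with a fundamental symmetry
`J : H →L[ℂ] H` (selfadjoint, `J ∘L J = 1`); the indefinite inner product is `[x,y] = ⟪J x, y⟫`. -/

noncomputable section

open scoped ComplexInnerProductSpace ComplexOrder
open ContinuousLinearMap

attribute [local instance] Classical.propDecidable

namespace KreinFrames

universe u

variable {H : Type*} [NormedAddCommGroup H] [InnerProductSpace ℂ H]

/-! Since `J` is selfadjoint with `J² = 1`, `H₊ ⊥ H₋` and `[n, n] = ‖n⁺‖² - ‖n⁻‖²`, so a unit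
neutral vector has `‖n⁺‖ = ‖n⁻‖ = 1/√2`. Then `|⟪m, n⟫| ≤ |⟪m⁺, n⁺⟫| + |⟪m⁻, n⁻⟫|` and
Cauchy–Schwarz give the bound, which is attained at `n = (u + v)/√2` for unit vectors `u ∈ H₊`,
`v ∈ H₋` with `⟪m⁺, u⟫ = ‖m⁺‖` and `⟪m⁻, v⟫ = ‖m⁻‖`. -/

lemma exists_mem_norm_eq_one_inner_eq_norm {𝕜 E : Type*} [RCLike 𝕜] [NormedAddCommGroup E]
    [InnerProductSpace 𝕜 E] {P : Submodule 𝕜 E} (hP : P ≠ ⊥) {w : E} (hw : w ∈ P) :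
    ∃ u ∈ P, ‖u‖ = 1 ∧ inner 𝕜 w u = (‖w‖ : 𝕜) := by
  by_cases hw0 : w = 0
  · obtain ⟨u, huP, hu0⟩ := (Submodule.ne_bot_iff P).mp hP
    exact ⟨_, P.smul_mem _ huP, norm_smul_inv_norm hu0, by simp [hw0]⟩
  · refine ⟨_, P.smul_mem _ hw, norm_smul_inv_norm hw0, ?_⟩
    have hnorm : (‖w‖ : 𝕜) ≠ 0 := by simpa using hw0
    rw [inner_smul_right, inner_self_eq_norm_sq_to_K]
    field_simp

section FundamentalDecomposition

variable {J : H →L[ℂ] H}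

local notation "𝓗₊" => LinearMap.ker ((J - 1 : H →L[ℂ] H) : H →ₗ[ℂ] H)
local notation "𝓗₋" => LinearMap.ker ((J + 1 : H →L[ℂ] H) : H →ₗ[ℂ] H)

lemma apply_eq_self_of_mem_ker_sub_one {x : H} (hx : x ∈ 𝓗₊) : J x = x :=
  sub_eq_zero.mp hx

lemma apply_eq_neg_of_mem_ker_add_one {x : H} (hx : x ∈ 𝓗₋) : J x = -x :=
  eq_neg_of_add_eq_zero_left hx

lemma inner_eq_zero_of_mem_ker_sub_one_of_mem_ker_add_one
    (hJ : (J : H →ₗ[ℂ] H).IsSymmetric) {x y : H} (hx : x ∈ 𝓗₊) (hy : y ∈ 𝓗₋) : ⟪x, y⟫ = 0 := by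
  have h := hJ x y
  rw [coe_coe, apply_eq_self_of_mem_ker_sub_one hx, apply_eq_neg_of_mem_ker_add_one hy,
    inner_neg_right] at h
  exact self_eq_neg.mp h

lemma exists_fundamental_decomposition (hJsq : J ∘L J = 1) (x : H) :
    ∃ p ∈ 𝓗₊, ∃ q ∈ 𝓗₋, x = p + q := by
  have hJJ : J (J x) = x := congr($hJsq x)
  refine ⟨(2⁻¹ : ℂ) • (x + J x), ?_, (2⁻¹ : ℂ) • (x - J x), ?_, by module⟩
  · simp only [LinearMap.mem_ker, coe_coe, sub_apply, one_apply_eq_self, map_smul, map_add,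
      hJJ]
    module
  · simp only [LinearMap.mem_ker, coe_coe, add_apply, one_apply_eq_self, map_smul, map_sub,
      hJJ]
    module

lemma inner_add_add_of_mem_ker (hJ : (J : H →ₗ[ℂ] H).IsSymmetric) {p q p' q' : H}
    (hp : p ∈ 𝓗₊) (hq : q ∈ 𝓗₋) (hp' : p' ∈ 𝓗₊) (hq' : q' ∈ 𝓗₋) :
    ⟪p + q, p' + q'⟫ = ⟪p, p'⟫ + ⟪q, q'⟫ := by
  have hpq' : ⟪p, q'⟫ = 0 := inner_eq_zero_of_mem_ker_sub_one_of_mem_ker_add_one hJ hp hq'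
  have hqp' : ⟪q, p'⟫ = 0 := by
    rw [← inner_conj_symm,
      inner_eq_zero_of_mem_ker_sub_one_of_mem_ker_add_one hJ hp' hq, map_zero]
  rw [inner_add_left, inner_add_right, inner_add_right, hpq', hqp', add_zero, zero_add]

lemma norm_add_sq_of_mem_ker (hJ : (J : H →ₗ[ℂ] H).IsSymmetric) {p q : H}
    (hp : p ∈ 𝓗₊) (hq : q ∈ 𝓗₋) : ‖p + q‖ ^ 2 = ‖p‖ ^ 2 + ‖q‖ ^ 2 := by
  simpa only [sq] using norm_add_sq_eq_norm_sq_add_norm_sq_of_inner_eq_zero p q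
    (inner_eq_zero_of_mem_ker_sub_one_of_mem_ker_add_one hJ hp hq)

lemma inner_apply_add_self_of_mem_ker (hJ : (J : H →ₗ[ℂ] H).IsSymmetric) {p q : H}
    (hp : p ∈ 𝓗₊) (hq : q ∈ 𝓗₋) : ⟪J (p + q), p + q⟫ = ((‖p‖ ^ 2 - ‖q‖ ^ 2 : ℝ) : ℂ) := by
  rw [map_add, apply_eq_self_of_mem_ker_sub_one hp, apply_eq_neg_of_mem_ker_add_one hq,
    inner_add_add_of_mem_ker hJ hp (neg_mem hq) hp hq, inner_neg_left]
  simp only [inner_self_eq_norm_sq_to_K, ← sub_eq_add_neg]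
  norm_cast

lemma norm_eq_inv_sqrt_two_of_neutral (hJ : (J : H →ₗ[ℂ] H).IsSymmetric) {p q : H}
    (hp : p ∈ 𝓗₊) (hq : q ∈ 𝓗₋) (hneutral : ⟪J (p + q), p + q⟫ = 0) (hnorm : ‖p + q‖ = 1) :
    ‖p‖ = (√2)⁻¹ ∧ ‖q‖ = (√2)⁻¹ := by
  have hdiff : ‖p‖ ^ 2 - ‖q‖ ^ 2 = 0 := by
    exact_mod_cast (inner_apply_add_self_of_mem_ker hJ hp hq).symm.trans hneutral
  have hsum : ‖p‖ ^ 2 + ‖q‖ ^ 2 = 1 := by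
    rw [← norm_add_sq_of_mem_ker hJ hp hq, hnorm, one_pow]
  have hsqrt {x : H} (hx : ‖x‖ ^ 2 = 2⁻¹) : ‖x‖ = (√2)⁻¹ := by
    rw [← Real.sqrt_inv, ← hx, Real.sqrt_sq (norm_nonneg x)]
  exact ⟨hsqrt (by linarith), hsqrt (by linarith)⟩

lemma norm_inner_le_of_neutral (hJ : (J : H →ₗ[ℂ] H).IsSymmetric) (hJsq : J ∘L J = 1)
    {mp mm n : H} (hmp : mp ∈ 𝓗₊) (hmm : mm ∈ 𝓗₋) (hneutral : ⟪J n, n⟫ = 0)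
    (hnorm : ‖n‖ = 1) :
    ‖⟪mp + mm, n⟫‖ ≤ (√2)⁻¹ * (‖mp‖ + ‖mm‖) := by
  obtain ⟨p, hp, q, hq, rfl⟩ := exists_fundamental_decomposition hJsq n
  obtain ⟨hpn, hqn⟩ := norm_eq_inv_sqrt_two_of_neutral hJ hp hq hneutral hnorm
  calc ‖⟪mp + mm, p + q⟫‖ = ‖⟪mp, p⟫ + ⟪mm, q⟫‖ := by
        rw [inner_add_add_of_mem_ker hJ hmp hmm hp hq]
    _ ≤ ‖⟪mp, p⟫‖ + ‖⟪mm, q⟫‖ := norm_add_le _ _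
    _ ≤ ‖mp‖ * ‖p‖ + ‖mm‖ * ‖q‖ :=
        add_le_add (norm_inner_le_norm _ _) (norm_inner_le_norm _ _)
    _ = (√2)⁻¹ * (‖mp‖ + ‖mm‖) := by rw [hpn, hqn]; ring

lemma exists_neutral_norm_inner_eq (hJ : (J : H →ₗ[ℂ] H).IsSymmetric) (hp : 𝓗₊ ≠ ⊥)
    (hm : 𝓗₋ ≠ ⊥) {mp mm : H} (hmp : mp ∈ 𝓗₊) (hmm : mm ∈ 𝓗₋) :
    ∃ n : H, ⟪J n, n⟫ = 0 ∧ ‖n‖ = 1 ∧ ‖⟪mp + mm, n⟫‖ = (√2)⁻¹ * (‖mp‖ + ‖mm‖) := by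
  obtain ⟨u, hu, hu1, hmpu⟩ := exists_mem_norm_eq_one_inner_eq_norm hp hmp
  obtain ⟨v, hv, hv1, hmmv⟩ := exists_mem_norm_eq_one_inner_eq_norm hm hmm
  set c : ℂ := ↑((√2)⁻¹ : ℝ)
  have hc : ‖c‖ = (√2)⁻¹ := by simp [c]
  have hcu : c • u ∈ 𝓗₊ := Submodule.smul_mem _ c hu
  have hcv : c • v ∈ 𝓗₋ := Submodule.smul_mem _ c hv
  have hcu1 : ‖c • u‖ = (√2)⁻¹ := by rw [norm_smul, hc, hu1, mul_one]
  have hcv1 : ‖c • v‖ = (√2)⁻¹ := by rw [norm_smul, hc, hv1, mul_one]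
  refine ⟨c • u + c • v, ?_, ?_, ?_⟩
  · rw [inner_apply_add_self_of_mem_ker hJ hcu hcv, hcu1, hcv1, sub_self, Complex.ofReal_zero]
  · rw [← sq_eq_sq₀ (norm_nonneg _) zero_le_one, norm_add_sq_of_mem_ker hJ hcu hcv, hcu1, hcv1]
    norm_num
  · rw [inner_add_add_of_mem_ker hJ hmp hmm hcu hcv, inner_smul_right, inner_smul_right, hmpu,
      hmmv, ← mul_add, norm_mul, hc]
    norm_cast
    rw [abs_of_nonneg (by positivity)]

end FundamentalDecomposition

theorem statement6_general {H : Type*} [NormedAddCommGroup H] [InnerProductSpace ℂ H] [CompleteSpace H]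
    (J : H →L[ℂ] H) (hJsa : IsSelfAdjoint J) (hJsq : J ∘L J = 1)
    (hp : LinearMap.ker ((J - 1 : H →L[ℂ] H) : H →ₗ[ℂ] H) ≠ ⊥) (hm : LinearMap.ker ((J + 1 : H →L[ℂ] H) : H →ₗ[ℂ] H) ≠ ⊥)
    (m mp mm : H) (hmp : mp ∈ LinearMap.ker ((J - 1 : H →L[ℂ] H) : H →ₗ[ℂ] H)) (hmm : mm ∈ LinearMap.ker ((J + 1 : H →L[ℂ] H) : H →ₗ[ℂ] H))
    (hsum : m = mp + mm) :
    sSup {r : ℝ | ∃ n : H, ⟪J n, n⟫ = 0 ∧ ‖n‖ = 1 ∧ r = ‖⟪m, n⟫‖} =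
      1 / Real.sqrt 2 * (‖mp‖ + ‖mm‖) := by
  subst hsum
  have hJ := hJsa.isSymmetric
  obtain ⟨n, hn0, hn1, hn⟩ := exists_neutral_norm_inner_eq hJ hp hm hmp hmm
  rw [one_div]
  refine IsGreatest.csSup_eq ⟨⟨n, hn0, hn1, hn.symm⟩, ?_⟩
  rintro r ⟨n, hn0, hn1, rfl⟩
  exact norm_inner_le_of_neutral hJ hJsq hmp hmm hn0 hn1

/-- for a unit vector `m = m⁺ + m⁻`, the supremum of `|⟪m,n⟫|` over unit neutral
vectors `n` equals `(‖m⁺‖ + ‖m⁻‖)/√2`. -/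
theorem statement6 {H : Type*} [NormedAddCommGroup H] [InnerProductSpace ℂ H] [CompleteSpace H]
    (J : H →L[ℂ] H) (hJsa : IsSelfAdjoint J) (hJsq : J ∘L J = 1)
    (hp : LinearMap.ker ((J - 1 : H →L[ℂ] H) : H →ₗ[ℂ] H) ≠ ⊥) (hm : LinearMap.ker ((J + 1 : H →L[ℂ] H) : H →ₗ[ℂ] H) ≠ ⊥)
    (m mp mm : H) (hmp : mp ∈ LinearMap.ker ((J - 1 : H →L[ℂ] H) : H →ₗ[ℂ] H)) (hmm : mm ∈ LinearMap.ker ((J + 1 : H →L[ℂ] H) : H →ₗ[ℂ] H))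
    (hsum : m = mp + mm) (hnorm : ‖m‖ = 1) :
    sSup {r : ℝ | ∃ n : H, ⟪J n, n⟫ = 0 ∧ ‖n‖ = 1 ∧ r = ‖⟪m, n⟫‖} =
      1 / Real.sqrt 2 * (‖mp‖ + ‖mm‖) :=
  statement6_general J hJsa hJsq hp hm m mp mm hmp hmm hsum

end KreinFrames
end
end

section
/- Let H₁, H₂ be complex Hilbert spaces, let T : H₁ → H₂ be a bounded surjective operator with Moore–Penrose inverse T† = T*(TT*)⁻¹, and let S be a closed subspace of H₁ with orthogonal projection P_S such that the Friedrichs angle satisfies c(S, N(T)^⊥) < 1. Then T P_S T† is a projection (i.e. (T P_S T†)² = T P_S T†) if and only if N(T) = (S ∩ N(T)) ⊕ (S^⊥ ∩ N(T)). -/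
/- Frames for Krein spaces ("J-frames"), following Giribet–Maestripieri–Martínez Pería–Massey.

A Krein space is modelled as a complex Hilbert space `H` together with a fundamental symmetry
`J : H →L[ℂ] H` (selfadjoint, `J ∘L J = 1`); the indefinite inner product is `[x,y] = ⟪J x, y⟫`. -/

noncomputable section

open scoped ComplexInnerProductSpace ComplexOrder
open ContinuousLinearMap

attribute [local instance] Classical.propDecidable

namespace KreinFrames

universe u

variable {H : Type*} [NormedAddCommGroup H] [InnerProductSpace ℂ H]

/-!
Write `Q = T†T` and `P = P_S`; both are orthogonal projections, and `N(Q) = N(T)`.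
Since `TT† = 1`, `T P T†` is idempotent iff `QPQ` is. In a C⋆-algebra, `QPQ = (PQ)⋆(PQ)`
idempotent makes `PQ` a partial isometry, `PQPQ = PQ`, and then `((1 - P)QP)⋆((1 - P)QP) = 0`,
so `QP = PQP` is selfadjoint and `P` commutes with `Q`. Finally `P` commutes with `Q` iff `P`
leaves `N(Q)` invariant, i.e. iff `N(T)` splits along `S ⊕ S^⊥`.
-/

section CStarRing

variable {A : Type*} [NonUnitalNormedRing A] [StarRing A] [CStarRing A]

theorem _root_.mul_star_mul_self_of_isIdempotentElem_star_mul_self {a : A}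
    (h : IsIdempotentElem (star a * a)) : a * star a * a = a := by
  rw [← sub_eq_zero, ← CStarRing.star_mul_self_eq_zero_iff]
  have he : star a * a * (star a * a) = star a * a := h.eq
  calc star (a * star a * a - a) * (a * star a * a - a)
      = star a * a * (star a * a) * (star a * a) - star a * a * (star a * a)
          - star a * a * (star a * a) + star a * a := by
        simp only [star_sub, star_mul, star_star]; noncomm_ring
    _ = 0 := by rw [he, he]; abel

theorem _root_.IsStarProjection.isIdempotentElem_mul_mul_iff_commute {p q : A}
    (hp : IsStarProjection p) (hq : IsStarProjection q) :
    IsIdempotentElem (q * p * q) ↔ Commute p q := by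
  have hp2 : p * p = p := hp.isIdempotentElem.eq
  have hq2 : q * q = q := hq.isIdempotentElem.eq
  have hps : star p = p := hp.isSelfAdjoint.star_eq
  have hqs : star q = q := hq.isSelfAdjoint.star_eq
  constructor
  · intro h
    have hpq : p * q * (p * q) = p * q := by
      have h' : star (p * q) * (p * q) = q * p * q := by
        rw [star_mul, hps, hqs, mul_assoc, ← mul_assoc p, hp2, mul_assoc]
      have := mul_star_mul_self_of_isIdempotentElem_star_mul_self (a := p * q) (h' ▸ h)
      rwa [mul_assoc, h', ← mul_assoc, ← mul_assoc, mul_assoc p q q, hq2,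
        mul_assoc _ p q] at this
    have hqp : q * p = p * q * p := by
      rw [← sub_eq_zero, ← CStarRing.star_mul_self_eq_zero_iff]
      calc star (q * p - p * q * p) * (q * p - p * q * p)
          = p * (q * q) * p - p * q * (p * q) * p - p * q * (p * q) * p
              + p * q * (p * p) * q * p := by
            simp only [star_sub, star_mul, hps, hqs]; noncomm_ring
        _ = p * q * p - p * q * (p * q) * p := by rw [hq2, hp2]; noncomm_ring
        _ = 0 := by rw [hpq, sub_self]
    calc p * q = star (q * p) := by rw [star_mul, hps, hqs]
      _ = star (p * q * p) := by rw [hqp]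
      _ = q * p := by rw [star_mul, star_mul, hps, hqs, ← mul_assoc, ← hqp]
  · intro h
    rw [← h.eq, mul_assoc, hq2]
    exact hp.isIdempotentElem.mul_of_commute h hq.isIdempotentElem

end CStarRing

section TopologicalModule

variable {R M N : Type*} [Semiring R] [TopologicalSpace M] [AddCommMonoid M] [Module R M]
  [TopologicalSpace N] [AddCommMonoid N] [Module R N]

theorem _root_.ContinuousLinearMap.isIdempotentElem_comp_comp_iff
    {T : M →L[R] N} {T' : N →L[R] M} (hT : T ∘L T' = 1) (X : M →L[R] M) :
    IsIdempotentElem (T ∘L X ∘L T') ↔ IsIdempotentElem ((T' ∘L T) * X * (T' ∘L T)) := by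
  have hTT' (y : N) : T (T' y) = y := congr($hT y)
  constructor
  · intro h
    ext x
    simpa [hTT'] using congr(T' ($h (T x)))
  · intro h
    ext y
    simpa [hTT'] using congr(T ($h (T' y)))

theorem _root_.ContinuousLinearMap.ker_comp_eq_ker_of_comp_eq_one
    {T : M →L[R] N} {T' : N →L[R] M} (hT : T ∘L T' = 1) : (T' ∘L T).ker = T.ker :=
  LinearMap.ker_comp_of_ker_eq_bot _ (LinearMap.ker_eq_bot_of_inverse congr(($hT : N →ₗ[R] N)))

end TopologicalModule

section InnerProductSpace

variable {𝕜 E F : Type*} [RCLike 𝕜] [NormedAddCommGroup E] [InnerProductSpace 𝕜 E]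
  [NormedAddCommGroup F] [InnerProductSpace 𝕜 F]

theorem _root_.Submodule.mem_invtSubmodule_starProjection_iff (S K : Submodule 𝕜 E)
    [S.HasOrthogonalProjection] :
    K ∈ Module.End.invtSubmodule S.starProjection ↔ K = (S ⊓ K) ⊔ (Sᗮ ⊓ K) := by
  rw [Module.End.mem_invtSubmodule_iff_forall_mem_of_mem]
  constructor
  · intro h
    refine le_antisymm (fun x hx ↦ ?_) (sup_le inf_le_right inf_le_right)
    have hPx : S.starProjection x ∈ S ⊓ K := ⟨S.starProjection_apply_mem x, h x hx⟩
    have hx' : x - S.starProjection x ∈ Sᗮ ⊓ K :=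
      ⟨S.sub_starProjection_mem_orthogonal x, K.sub_mem hx hPx.2⟩
    simpa using Submodule.add_mem_sup hPx hx'
  · intro h x hx
    rw [h] at hx
    obtain ⟨a, ha, b, hb, rfl⟩ := Submodule.mem_sup.mp hx
    simpa [S.starProjection_eq_self_iff.mpr ha.1,
      S.starProjection_apply_eq_zero_iff.mpr hb.1] using ha.2

variable [CompleteSpace E] [CompleteSpace F]

theorem _root_.ContinuousLinearMap.commute_iff_ker_mem_invtSubmodule {p q : E →L[𝕜] E}
    (hq : IsStarProjection q) (hp : IsSelfAdjoint p) :
    Commute q p ↔ q.ker ∈ Module.End.invtSubmodule p := by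
  refine ⟨fun h ↦ (hq.isIdempotentElem.commute_iff.mp h).2, fun h ↦ ?_⟩
  have hqpq : q * p * q = q * p := hq.isIdempotentElem.conj_eq_of_ker_mem_invtSubmodule h
  have hstar := congr(star $hqpq)
  simp only [star_mul, hq.isSelfAdjoint.star_eq, hp.star_eq, ← mul_assoc] at hstar
  rw [Commute, SemiconjBy, ← hqpq, hstar]

-- A right inverse of the selfadjoint `T T*` is also a left inverse, hence equals its adjoint.
theorem _root_.ContinuousLinearMap.isSelfAdjoint_of_comp_eq_one
    {T : E →L[𝕜] F} {R : F →L[𝕜] F} (hR : (T ∘L adjoint T) ∘L R = 1) :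
    IsSelfAdjoint R := by
  have hleft : adjoint R ∘L (T ∘L adjoint T) = 1 := by
    simpa [adjoint_comp, adjoint_one] using congr(adjoint $hR)
  calc adjoint R = adjoint R ∘L ((T ∘L adjoint T) ∘L R) := by rw [hR]; rfl
    _ = R := by rw [← comp_assoc, hleft]; rfl

theorem _root_.ContinuousLinearMap.isStarProjection_adjoint_comp_comp
    {T : E →L[𝕜] F} {R : F →L[𝕜] F} (hR : (T ∘L adjoint T) ∘L R = 1) :
    IsStarProjection ((adjoint T ∘L R) ∘L T) where
  isIdempotentElem := by
    ext x
    simpa using congr(adjoint T (R ($hR (T x))))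
  isSelfAdjoint := (isSelfAdjoint_of_comp_eq_one hR).adjoint_conj T

end InnerProductSpace

theorem statement9_general {H1 H2 : Type*} [NormedAddCommGroup H1] [InnerProductSpace ℂ H1]
    [CompleteSpace H1] [NormedAddCommGroup H2] [InnerProductSpace ℂ H2] [CompleteSpace H2]
    (T : H1 →L[ℂ] H2)
    (R : H2 →L[ℂ] H2) (hR1 : (T ∘L adjoint T) ∘L R = 1)
    (Tdag : H2 →L[ℂ] H1) (hTdag : Tdag = adjoint T ∘L R)
    (S : Submodule ℂ H1) [S.HasOrthogonalProjection]
    (PS : H1 →L[ℂ] H1) (hPS : PS = S.subtypeL ∘L S.orthogonalProjectionOnto) :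
    (T ∘L PS ∘L Tdag) ∘L (T ∘L PS ∘L Tdag) = T ∘L PS ∘L Tdag ↔
      LinearMap.ker (T : H1 →ₗ[ℂ] H2) = (S ⊓ LinearMap.ker (T : H1 →ₗ[ℂ] H2)) ⊔ (Sᗮ ⊓ LinearMap.ker (T : H1 →ₗ[ℂ] H2)) := by
  obtain rfl : PS = S.starProjection := hPS
  subst hTdag
  have hright : T ∘L (adjoint T ∘L R) = 1 := hR1
  have hQ := isStarProjection_adjoint_comp_comp hR1
  change IsIdempotentElem (T ∘L S.starProjection ∘L (adjoint T ∘L R)) ↔ _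
  rw [isIdempotentElem_comp_comp_iff hright,
    isStarProjection_starProjection.isIdempotentElem_mul_mul_iff_commute hQ, Commute.symm_iff,
    commute_iff_ker_mem_invtSubmodule hQ (isSelfAdjoint_starProjection S),
    ker_comp_eq_ker_of_comp_eq_one hright, Submodule.mem_invtSubmodule_starProjection_iff]

/-- for a surjective `T` and a closed subspace `S` with `c(S, N(T)^⊥) < 1`,
`T P_S T†` is a projection iff `N(T) = (S ∩ N(T)) ⊕ (S^⊥ ∩ N(T))`. -/
theorem statement9 {H1 H2 : Type*} [NormedAddCommGroup H1] [InnerProductSpace ℂ H1]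
    [CompleteSpace H1] [NormedAddCommGroup H2] [InnerProductSpace ℂ H2] [CompleteSpace H2]
    (T : H1 →L[ℂ] H2) (hsurj : Function.Surjective T)
    (R : H2 →L[ℂ] H2) (hR1 : (T ∘L adjoint T) ∘L R = 1) (hR2 : R ∘L (T ∘L adjoint T) = 1)
    (Tdag : H2 →L[ℂ] H1) (hTdag : Tdag = adjoint T ∘L R)
    (S : Submodule ℂ H1) (hSclosed : IsClosed (S : Set H1)) [S.HasOrthogonalProjection]
    (PS : H1 →L[ℂ] H1) (hPS : PS = S.subtypeL ∘L S.orthogonalProjectionOnto)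
    (hangle : friedrichs S (LinearMap.ker (T : H1 →ₗ[ℂ] H2))ᗮ < 1) :
    (T ∘L PS ∘L Tdag) ∘L (T ∘L PS ∘L Tdag) = T ∘L PS ∘L Tdag ↔
      LinearMap.ker (T : H1 →ₗ[ℂ] H2) = (S ⊓ LinearMap.ker (T : H1 →ₗ[ℂ] H2)) ⊔ (Sᗮ ⊓ LinearMap.ker (T : H1 →ₗ[ℂ] H2)) :=
  statement9_general T R hR1 Tdag hTdag S PS hPS

end KreinFrames
end
end
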